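/- Let k ≥ 1, u, y : Fin k → ℕ with ∑_{l ≤ j} u l ≤ ∑_{l ≤ j} y l for all j, and let V(u,y) be as above. Suppose v ∈ V(u,y), v ≠ v*, let j be the largest index with v j < v* j, and let i < j be the largest index below j with v i > 0 (such i exists). Define T(v) by T(v) j = v j + 1, T(v) i = v i − 1, and T(v) l = v l otherwise. Then T(v) ∈ V(u,y). -/

import Mathlib

/-!
The allocation `v*` fills the varieties greedily from the top index down, so by downward
induction its suffix sums never exceed those of `u` and dominate those of every feasible `v`.
Moving a unit from `i` to `j` only lowers the prefix sums at the indices `m` with `i ≤ m < j`, by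
one. As `v` vanishes strictly between `i` and `j`, for such `m` the sum of `v` beyond `m` is
`v j + ∑_{l > j} v l < v* j + ∑_{l > j} v* l ≤ ∑_{l ≥ j} u l ≤ ∑_{l > m} u l`, so the prefix
constraint held strictly at `m` and survives the move. At `j` the capacity is respected because
`v j < v* j ≤ y j`.
-/

open Finset

variable {α : Type*}

section MoveUnit

variable [DecidableEq α] {v : α → ℕ} {i j : α}

/-- The paper's `T`. -/
def moveUnit (v : α → ℕ) (i j : α) : α → ℕ :=
  fun l => if l = j then v l + 1 else if l = i then v l - 1 else v l

-- Both sides are shifted so that no truncated subtraction occurs.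
theorem moveUnit_add_ite (hij : i ≠ j) (hi : 0 < v i) (l : α) :
    moveUnit v i j l + (if l = i then 1 else 0) = v l + (if l = j then 1 else 0) := by
  unfold moveUnit
  split_ifs <;> subst_vars <;> first | omega | exact absurd rfl hij

theorem sum_moveUnit_add_ite (hij : i ≠ j) (hi : 0 < v i) (s : Finset α) :
    ∑ l ∈ s, moveUnit v i j l + (if i ∈ s then 1 else 0) =
      ∑ l ∈ s, v l + (if j ∈ s then 1 else 0) := by
  simpa only [sum_add_distrib, sum_ite_eq'] using
    sum_congr rfl fun l _ => moveUnit_add_ite hij hi l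

end MoveUnit

section Intervals

variable {M : Type*} [AddCommMonoid M] [LinearOrder α] [LocallyFiniteOrderTop α]

theorem Finset.sum_Ioi_eq_add_sum_Ioi_succ [SuccOrder α] (f : α → M) {m : α} (hm : ¬IsMax m) :
    ∑ l ∈ Ioi m, f l = f (Order.succ m) + ∑ l ∈ Ioi (Order.succ m), f l := by
  classical
  rw [← Ici_succ_eq_Ioi_of_not_isMax hm, ← Ioi_insert, sum_insert notMem_Ioi_self]

theorem Finset.sum_Iic_add_sum_Ioi [Fintype α] [LocallyFiniteOrderBot α] (f : α → M) (m : α) :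
    ∑ l ∈ Iic m, f l + ∑ l ∈ Ioi m, f l = ∑ l, f l := by
  rw [← sum_filter_add_sum_filter_not univ (· ≤ m)]
  simp only [filter_ge_eq_Iic, not_le, filter_lt_eq_Ioi]

end Intervals

section Allocation

variable [LinearOrder α] [LocallyFiniteOrderTop α]

/-- The paper's `v*`: filling the varieties from the top index down, each up to its capacity. -/
def IsGreedyFromTop (u y w : α → ℕ) : Prop :=
  ∀ j, w j = min (y j) (u j + ((∑ l ∈ Ioi j, u l) - ∑ l ∈ Ioi j, w l))

/-- The set `V(u, y)`. -/
def feasibleSet [Fintype α] [LocallyFiniteOrderBot α] (u y : α → ℕ) : Set (α → ℕ) :=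
  {v | (∀ m, v m ≤ y m) ∧ (∀ m, ∑ l ∈ Iic m, u l ≤ ∑ l ∈ Iic m, v l) ∧
    ∑ l, v l = ∑ l, u l}

variable {u y v w : α → ℕ}

namespace IsGreedyFromTop

theorem le_add_tsub (hw : IsGreedyFromTop u y w) (j : α) :
    w j ≤ u j + ((∑ l ∈ Ioi j, u l) - ∑ l ∈ Ioi j, w l) :=
  (hw j).le.trans (min_le_right _ _)

theorem sum_Ioi_le [Finite α] [SuccOrder α] (hw : IsGreedyFromTop u y w) (m : α) :
    ∑ l ∈ Ioi m, w l ≤ ∑ l ∈ Ioi m, u l := by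
  induction m using WellFoundedGT.induction with
  | _ m ih =>
    by_cases hm : IsMax m
    · simp [Ioi_eq_empty.mpr hm]
    · rw [sum_Ioi_eq_add_sum_Ioi_succ _ hm, sum_Ioi_eq_add_sum_Ioi_succ _ hm]
      have := ih _ (Order.lt_succ_of_not_isMax hm)
      have := hw.le_add_tsub (Order.succ m)
      omega

theorem add_sum_Ioi_le [Finite α] [SuccOrder α] (hw : IsGreedyFromTop u y w) (j : α) :
    w j + ∑ l ∈ Ioi j, w l ≤ u j + ∑ l ∈ Ioi j, u l := by
  have := hw.sum_Ioi_le j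
  have := hw.le_add_tsub j
  omega

theorem sum_Ioi_le_sum_Ioi [Finite α] [SuccOrder α] (hw : IsGreedyFromTop u y w)
    (hvy : ∀ m, v m ≤ y m)
    (hvu : ∀ m, ∑ l ∈ Ioi m, v l ≤ ∑ l ∈ Ioi m, u l) (m : α) :
    ∑ l ∈ Ioi m, v l ≤ ∑ l ∈ Ioi m, w l := by
  induction m using WellFoundedGT.induction with
  | _ m ih =>
    by_cases hm : IsMax m
    · simp [Ioi_eq_empty.mpr hm]
    · have hvu := hvu m
      rw [sum_Ioi_eq_add_sum_Ioi_succ v hm, sum_Ioi_eq_add_sum_Ioi_succ u hm] at hvu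
      rw [sum_Ioi_eq_add_sum_Ioi_succ v hm, sum_Ioi_eq_add_sum_Ioi_succ w hm]
      have := ih _ (Order.lt_succ_of_not_isMax hm)
      have := hw.sum_Ioi_le (Order.succ m)
      have := hvy (Order.succ m)
      have := hw (Order.succ m)
      rw [Nat.min_def] at this
      split_ifs at this <;> omega

end IsGreedyFromTop

section Feasible

variable [Fintype α] [LocallyFiniteOrderBot α]

theorem sum_Ioi_le_of_mem_feasibleSet (hv : v ∈ feasibleSet u y) (m : α) :
    ∑ l ∈ Ioi m, v l ≤ ∑ l ∈ Ioi m, u l := by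
  have := sum_Iic_add_sum_Ioi u m
  have := sum_Iic_add_sum_Ioi v m
  have := hv.2.1 m
  have := hv.2.2
  omega

theorem sum_Iic_lt_of_lt_greedy [SuccOrder α] (hv : v ∈ feasibleSet u y)
    (hw : IsGreedyFromTop u y w) {m j : α} (hmj : m < j) (hj : v j < w j)
    (hzero : ∀ l, m < l → l < j → v l = 0) :
    ∑ l ∈ Iic m, u l < ∑ l ∈ Iic m, v l := by
  have hsub : Ici j ⊆ Ioi m := fun l hl => mem_Ioi.mpr (hmj.trans_le (mem_Ici.mp hl))
  have hsuffix : ∑ l ∈ Ioi m, v l < ∑ l ∈ Ioi m, u l :=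
    calc ∑ l ∈ Ioi m, v l
        = ∑ l ∈ Ici j, v l := by
          refine (sum_subset hsub fun l hl hlj => hzero l (mem_Ioi.mp hl) ?_).symm
          simpa using hlj
      _ = v j + ∑ l ∈ Ioi j, v l := by rw [← Ioi_insert, sum_insert notMem_Ioi_self]
      _ < w j + ∑ l ∈ Ioi j, w l :=
          add_lt_add_of_lt_of_le hj
            (hw.sum_Ioi_le_sum_Ioi hv.1 (sum_Ioi_le_of_mem_feasibleSet hv) j)
      _ ≤ u j + ∑ l ∈ Ioi j, u l := hw.add_sum_Ioi_le j
      _ = ∑ l ∈ Ici j, u l := by rw [← Ioi_insert, sum_insert notMem_Ioi_self]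
      _ ≤ ∑ l ∈ Ioi m, u l := sum_le_sum_of_subset hsub
  have := sum_Iic_add_sum_Ioi u m
  have := sum_Iic_add_sum_Ioi v m
  have := hv.2.2
  omega

theorem moveUnit_mem_feasibleSet [SuccOrder α] {i j : α}
    (hv : v ∈ feasibleSet u y) (hw : IsGreedyFromTop u y w) (hj : v j < w j) (hij : i < j)
    (hi : 0 < v i) (hzero : ∀ l, i < l → l < j → v l = 0) :
    moveUnit v i j ∈ feasibleSet u y := by
  refine ⟨fun m => ?_, fun m => ?_, ?_⟩
  · have hwy : w j ≤ y j := (hw j).le.trans (min_le_left _ _)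
    have := hv.1 m
    unfold moveUnit
    split_ifs <;> subst_vars <;> omega
  · have hsum := sum_moveUnit_add_ite hij.ne hi (Iic m)
    have := hv.2.1 m
    simp only [mem_Iic] at hsum
    by_cases hjm : j ≤ m
    · rw [if_pos (hij.le.trans hjm), if_pos hjm] at hsum
      omega
    by_cases him : i ≤ m
    · have := sum_Iic_lt_of_lt_greedy hv hw (not_le.mp hjm) hj
        fun l hml hlj => hzero l (him.trans_lt hml) hlj
      rw [if_pos him, if_neg hjm] at hsum
      omega
    · rw [if_neg him, if_neg hjm] at hsum
      omega
  · have := sum_moveUnit_add_ite hij.ne hi univ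
    simp only [mem_univ, if_true] at this
    have := hv.2.2
    omega

end Feasible

end Allocation

theorem stmt4_general (k : ℕ) (u y v vstar : Fin k → ℕ)
    (hvstar : ∀ j : Fin k,
      vstar j = min (y j)
        (u j + ((∑ l ∈ Finset.Ioi j, u l) - (∑ l ∈ Finset.Ioi j, vstar l))))
    (hv1 : ∀ m : Fin k, v m ≤ y m)
    (hv2 : ∀ m : Fin k, (∑ l ∈ Finset.Iic m, u l) ≤ (∑ l ∈ Finset.Iic m, v l))
    (hv3 : (∑ l : Fin k, v l) = (∑ l : Fin k, u l))
    (j : Fin k) (hj : v j < vstar j)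
    (i : Fin k) (hij : i < j) (hipos : 0 < v i)
    (himax : ∀ l : Fin k, i < l → l < j → v l = 0) :
    (∀ m : Fin k,
      (if m = j then v m + 1 else if m = i then v m - 1 else v m) ≤ y m) ∧
    (∀ m : Fin k, (∑ l ∈ Finset.Iic m, u l) ≤
      (∑ l ∈ Finset.Iic m, (if l = j then v l + 1 else if l = i then v l - 1 else v l))) ∧
    (∑ l : Fin k, (if l = j then v l + 1 else if l = i then v l - 1 else v l))
      = (∑ l : Fin k, u l) :=
  moveUnit_mem_feasibleSet ⟨hv1, hv2, hv3⟩ hvstar hj hij hipos himax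

/-- Let `v ∈ V(u,y)`, `v ≠ v*`, let `j` be the largest index with
`v j < v* j`, and let `i < j` be the largest index below `j` with `v i > 0`.  Then the
transformed vector `T(v)` (with `T(v) j = v j + 1`, `T(v) i = v i − 1`, unchanged
elsewhere) is again in `V(u,y)`. -/
theorem stmt4 (k : ℕ) (hk : 1 ≤ k) (u y v vstar : Fin k → ℕ)
    (hu : ∀ j : Fin k, (∑ l ∈ Finset.Iic j, u l) ≤ (∑ l ∈ Finset.Iic j, y l))
    (hvstar : ∀ j : Fin k,
      vstar j = min (y j)
        (u j + ((∑ l ∈ Finset.Ioi j, u l) - (∑ l ∈ Finset.Ioi j, vstar l))))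
    (hv1 : ∀ m : Fin k, v m ≤ y m)
    (hv2 : ∀ m : Fin k, (∑ l ∈ Finset.Iic m, u l) ≤ (∑ l ∈ Finset.Iic m, v l))
    (hv3 : (∑ l : Fin k, v l) = (∑ l : Fin k, u l))
    (hne : v ≠ vstar)
    (j : Fin k) (hj : v j < vstar j)
    (hjmax : ∀ l : Fin k, j < l → ¬ v l < vstar l)
    (i : Fin k) (hij : i < j) (hipos : 0 < v i)
    (himax : ∀ l : Fin k, i < l → l < j → v l = 0) :
    (∀ m : Fin k,
      (if m = j then v m + 1 else if m = i then v m - 1 else v m) ≤ y m) ∧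
    (∀ m : Fin k, (∑ l ∈ Finset.Iic m, u l) ≤
      (∑ l ∈ Finset.Iic m, (if l = j then v l + 1 else if l = i then v l - 1 else v l))) ∧
    (∑ l : Fin k, (if l = j then v l + 1 else if l = i then v l - 1 else v l))
      = (∑ l : Fin k, u l) :=
  stmt4_general k u y v vstar hvstar hv1 hv2 hv3 j hj i hij hipos himax
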